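/- arXiv:1303.2878 — 7 statements merged into one kernel-verified Lean document; each statement's English description precedes it below -/
import Mathlib

section
/- Let m ≥ 2 and let a_1,…,a_m be positive integers with gcd(a_1,…,a_m) = 1, and set d_i = gcd(a_1,…,a_i). Then every integer n with n > −a_1 + Σ_{i=2}^m a_i(d_{i−1}/d_i − 1) can be written as n = a_1x_1 + ⋯ + a_mx_m with nonnegative integers x_1,…,x_m (Brauer's upper bound for the Frobenius number). -/
/-!
Induct on `m`, proving more generally that every multiple `n` of `d_m` exceeding the bound
for `a_1, …, a_m` is representable. Since `gcd (d_m, a_{m+1}) = d_{m+1}` divides `n`, the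
congruence `a_{m+1} x ≡ n (mod d_m)` has a solution `0 ≤ x < d_m / d_{m+1}`; then
`n - a_{m+1} x` is a multiple of `d_m` exceeding the bound for `m`, since that bound is
smaller than the one for `m + 1` by exactly `a_{m+1} (d_m / d_{m+1} - 1)`.
-/

/-- `dseq a i = gcd(a_1, …, a_i)`. -/
def dseq (a : ℕ → ℕ) (i : ℕ) : ℕ := (Finset.Icc 1 i).gcd a

open Finset

def Representable (a : ℕ → ℕ) (m : ℕ) (n : ℤ) : Prop :=
  ∃ x : ℕ → ℕ, n = ∑ i ∈ Icc 1 m, (a i : ℤ) * (x i : ℤ)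

def brauerBound (a : ℕ → ℕ) (m : ℕ) : ℤ :=
  -(a 1 : ℤ) + ∑ i ∈ Icc 2 m, (a i : ℤ) * (((dseq a (i - 1) / dseq a i : ℕ) : ℤ) - 1)

theorem Representable.add_mul_succ {a : ℕ → ℕ} {m : ℕ} {n : ℤ} (h : Representable a m n)
    (k : ℕ) : Representable a (m + 1) (n + a (m + 1) * k) := by
  obtain ⟨x, rfl⟩ := h
  refine ⟨Function.update x (m + 1) k, ?_⟩
  rw [sum_Icc_succ_top (by omega), Function.update_self]
  congr 1
  refine sum_congr rfl fun i hi => ?_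
  rw [Function.update_of_ne (by grind)]

theorem dseq_one (a : ℕ → ℕ) : dseq a 1 = a 1 := by
  simp [dseq]

theorem dseq_succ (a : ℕ → ℕ) (m : ℕ) : dseq a (m + 1) = Nat.gcd (a (m + 1)) (dseq a m) := by
  rw [dseq, ← insert_Icc_right_eq_Icc_add_one (by omega), gcd_insert]
  rfl

theorem dseq_pos {a : ℕ → ℕ} {m : ℕ} (hm : 1 ≤ m) (ha : 0 < a 1) : 0 < dseq a m :=
  Nat.pos_of_dvd_of_pos (gcd_dvd (by simp; omega)) ha

theorem brauerBound_one (a : ℕ → ℕ) : brauerBound a 1 = -(a 1 : ℤ) := by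
  simp [brauerBound]

theorem brauerBound_succ (a : ℕ → ℕ) {m : ℕ} (hm : 1 ≤ m) :
    brauerBound a (m + 1) =
      brauerBound a m + a (m + 1) * (((dseq a m / dseq a (m + 1) : ℕ) : ℤ) - 1) := by
  rw [brauerBound, brauerBound, sum_Icc_succ_top (by omega), add_assoc, Nat.add_sub_cancel]

theorem exists_lt_dvd_sub_mul {g : ℕ} (hg : 0 < g) (a : ℕ) {n : ℤ}
    (hn : (Nat.gcd g a : ℤ) ∣ n) :
    ∃ x : ℕ, x < g / Nat.gcd g a ∧ (g : ℤ) ∣ n - a * x := by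
  obtain ⟨k, rfl⟩ := hn
  set q := g / Nat.gcd g a
  have hq : 0 < q := Nat.div_pos (Nat.gcd_le_left a hg) (Nat.gcd_pos_of_pos_left a hg)
  have hqa : g ∣ a * q :=
    ⟨a / Nat.gcd g a, by
      rw [← Nat.mul_div_assoc _ (Nat.gcd_dvd_left g a), mul_comm,
        Nat.mul_div_assoc _ (Nat.gcd_dvd_right g a)]⟩
  set y := Nat.gcdB g a * k
  have hy : (g : ℤ) ∣ Nat.gcd g a * k - a * y :=
    ⟨Nat.gcdA g a * k, by rw [Nat.gcd_eq_gcd_ab]; ring⟩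
  have hr₀ : 0 ≤ y % q := Int.emod_nonneg y (by omega)
  have hr₁ : y % q < q := Int.emod_lt_of_pos y (by omega)
  -- reducing the Bezout solution `y` mod `q` keeps it a solution, as `g ∣ a * q`
  refine ⟨(y % q).toNat, by omega, ?_⟩
  have hsplit : Nat.gcd g a * k - a * (y % q).toNat
      = (Nat.gcd g a * k - a * y) + (a * q : ℕ) * (y / q) := by
    rw [Int.toNat_of_nonneg hr₀, Int.emod_def]; push_cast; ring
  rw [hsplit]
  exact dvd_add hy (dvd_mul_of_dvd_left (Int.natCast_dvd_natCast.2 hqa) _)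

theorem representable_of_brauerBound_lt {a : ℕ → ℕ} {m : ℕ} (hm : 1 ≤ m)
    (hpos : ∀ i, 1 ≤ i → i ≤ m → 0 < a i) {n : ℤ} (hdvd : (dseq a m : ℤ) ∣ n)
    (hn : brauerBound a m < n) : Representable a m n := by
  induction m, hm using Nat.le_induction generalizing n with
  | base =>
    rw [dseq_one] at hdvd
    rw [brauerBound_one] at hn
    obtain ⟨k, rfl⟩ := hdvd
    have ha := hpos 1 le_rfl le_rfl
    have hk : 0 ≤ k := by nlinarith
    exact ⟨fun _ => k.toNat, by simp [hk]⟩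
  | succ m hm ih =>
    have hg : 0 < dseq a m := dseq_pos hm (hpos 1 le_rfl (by omega))
    rw [dseq_succ, Nat.gcd_comm] at hdvd
    obtain ⟨x, hxq, hx⟩ := exists_lt_dvd_sub_mul hg (a (m + 1)) hdvd
    have hbound : brauerBound a m < n - a (m + 1) * x := by
      rw [brauerBound_succ a hm, dseq_succ, Nat.gcd_comm] at hn
      have : (x : ℤ) ≤ ((dseq a m / Nat.gcd (dseq a m) (a (m + 1)) : ℕ) : ℤ) - 1 := by omega
      nlinarith
    simpa using (ih (fun i h1 h2 => hpos i h1 (by omega)) hx hbound).add_mul_succ x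

theorem brauer_upper_bound_general
    (m : ℕ) (a : ℕ → ℕ)
    (hpos : ∀ i, 1 ≤ i → i ≤ m → 0 < a i)
    (hgcd : (Finset.Icc 1 m).gcd a = 1)
    (n : ℤ)
    (hn : -(a 1 : ℤ) + ∑ i ∈ Finset.Icc 2 m,
        (a i : ℤ) * (((dseq a (i - 1) / dseq a i : ℕ) : ℤ) - 1) < n) :
    ∃ x : ℕ → ℕ, n = ∑ i ∈ Finset.Icc 1 m, (a i : ℤ) * (x i : ℤ) := by
  have hm : 1 ≤ m := Nat.one_le_iff_ne_zero.2 (by rintro rfl; simp at hgcd)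
  have hd : dseq a m = 1 := hgcd
  exact representable_of_brauerBound_lt hm hpos (by simp [hd]) hn

/-- **Brauer's upper bound for the Frobenius number.**
Let `m ≥ 2` and `a_1, …, a_m` positive integers with `gcd(a_1,…,a_m) = 1`, and
`d_i = gcd(a_1,…,a_i)`.  Every integer
`n > -a_1 + ∑_{i=2}^m a_i (d_{i-1}/d_i - 1)` can be written as
`n = a_1 x_1 + ⋯ + a_m x_m` with nonnegative integers `x_1, …, x_m`. -/
theorem brauer_upper_bound
    (m : ℕ) (hm : 2 ≤ m) (a : ℕ → ℕ)
    (hpos : ∀ i, 1 ≤ i → i ≤ m → 0 < a i)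
    (hgcd : (Finset.Icc 1 m).gcd a = 1)
    (n : ℤ)
    (hn : -(a 1 : ℤ) + ∑ i ∈ Finset.Icc 2 m,
        (a i : ℤ) * (((dseq a (i - 1) / dseq a i : ℕ) : ℤ) - 1) < n) :
    ∃ x : ℕ → ℕ, n = ∑ i ∈ Finset.Icc 1 m, (a i : ℤ) * (x i : ℤ) :=
  brauer_upper_bound_general m a hpos hgcd n hn
end

section
/- Let (a_1,…,a_m) be a telescopic sequence. Then for every 2 ≤ i ≤ m there exist nonnegative integers k_1,…,k_{i−1} with 0 ≤ k_j ≤ d_{j−1}/d_j − 1 for all 2 ≤ j ≤ i−1 (k_1 unrestricted) such that a_i·d_{i−1}/d_i = a_1k_1 + ⋯ + a_{i−1}k_{i−1}. -/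
/-- The telescopic condition:
`a_i/d_i ∈ (a_1/d_{i-1})ℤ_{≥0} + ⋯ + (a_{i-1}/d_{i-1})ℤ_{≥0}` for `2 ≤ i ≤ m`. -/
def Telescopic (m : ℕ) (a : ℕ → ℕ) : Prop :=
  ∀ i, 2 ≤ i → i ≤ m →
    ∃ k : ℕ → ℕ,
      a i / dseq a i = ∑ j ∈ Finset.Icc 1 (i - 1), (a j / dseq a (i - 1)) * k j

/-!
Multiplying the telescopic relation at `i` by `d_{i-1}` writes `a_i · d_{i-1}/d_i` as some
combination `∑_{j<i} c_j a_j`. The coefficients are then reduced from the top down: write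
`c_j = q · (d_{j-1}/d_j) + r` with `r < d_{j-1}/d_j`, keep `r` as the coefficient of `a_j`, and
push `q · a_j · d_{j-1}/d_j` down to `a_1, …, a_{j-1}` by the same relation at `j`.
-/

open Finset

lemma dseq_dvd (a : ℕ → ℕ) {l i : ℕ} (hl : l ∈ Icc 1 i) : dseq a i ∣ a l :=
  Finset.gcd_dvd hl

lemma dseq_dvd_dseq (a : ℕ → ℕ) {i j : ℕ} (h : j ≤ i) : dseq a i ∣ dseq a j :=
  Finset.gcd_mono (Icc_subset_Icc_right h)

lemma dseq_pos_s5 (a : ℕ → ℕ) (h1 : 0 < a 1) {i : ℕ} (hi : 1 ≤ i) : 0 < dseq a i :=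
  Nat.pos_of_ne_zero fun h => h1.ne' (Finset.gcd_eq_zero_iff.mp h 1 (mem_Icc.mpr ⟨le_rfl, hi⟩))

lemma dseq_div_dseq_succ_pos (a : ℕ → ℕ) (h1 : 0 < a 1) {j : ℕ} (hj : 1 ≤ j) :
    0 < dseq a j / dseq a (j + 1) :=
  Nat.div_pos (Nat.le_of_dvd (dseq_pos_s5 a h1 hj) (dseq_dvd_dseq a j.le_succ))
    (dseq_pos_s5 a h1 (by omega))

lemma Telescopic.exists_mul_dseq_div_eq_sum {m : ℕ} {a : ℕ → ℕ} (htel : Telescopic m a)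
    {i : ℕ} (hi2 : 2 ≤ i) (him : i ≤ m) :
    ∃ k : ℕ → ℕ, a i * (dseq a (i - 1) / dseq a i) = ∑ l ∈ Icc 1 (i - 1), a l * k l := by
  obtain ⟨k, hk⟩ := htel i hi2 him
  refine ⟨k, ?_⟩
  calc a i * (dseq a (i - 1) / dseq a i)
      = a i / dseq a i * dseq a (i - 1) := by
        rw [← Nat.mul_div_assoc _ (dseq_dvd_dseq a (by omega)),
          Nat.div_mul_right_comm (dseq_dvd a (mem_Icc.mpr ⟨by omega, le_rfl⟩))]
    _ = ∑ l ∈ Icc 1 (i - 1), a l * k l := by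
        rw [hk, sum_mul]
        refine sum_congr rfl fun l hl => ?_
        rw [mul_right_comm, Nat.div_mul_cancel (dseq_dvd a hl)]

lemma sum_Icc_succ_eq_sum_add_mul_mod (a c k₀ : ℕ → ℕ) (j D : ℕ)
    (hk₀ : a (j + 1) * D = ∑ l ∈ Icc 1 j, a l * k₀ l) :
    ∑ l ∈ Icc 1 (j + 1), a l * c l
      = ∑ l ∈ Icc 1 j, a l * (c l + c (j + 1) / D * k₀ l) + a (j + 1) * (c (j + 1) % D) := by
  have hsplit : ∑ l ∈ Icc 1 j, a l * (c l + c (j + 1) / D * k₀ l)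
      = ∑ l ∈ Icc 1 j, a l * c l + c (j + 1) / D * (a (j + 1) * D) := by
    rw [hk₀, mul_sum, ← sum_add_distrib]
    exact sum_congr rfl fun l _ => by ring
  rw [sum_Icc_succ_top (by omega), hsplit]
  conv_lhs => rw [← Nat.div_add_mod (c (j + 1)) D]
  ring

lemma Telescopic.exists_bounded_rep {m : ℕ} {a : ℕ → ℕ} (htel : Telescopic m a) (h1 : 0 < a 1)
    {j : ℕ} (hj : 1 ≤ j) (hjm : j ≤ m) (c : ℕ → ℕ) :
    ∃ k : ℕ → ℕ,
      (∀ l, 2 ≤ l → l ≤ j → k l ≤ dseq a (l - 1) / dseq a l - 1) ∧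
      ∑ l ∈ Icc 1 j, a l * c l = ∑ l ∈ Icc 1 j, a l * k l := by
  induction j, hj using Nat.le_induction generalizing c with
  | base => exact ⟨c, fun l _ _ => by omega, rfl⟩
  | succ j hj ih =>
    set D := dseq a j / dseq a (j + 1)
    obtain ⟨k₀, hk₀⟩ := htel.exists_mul_dseq_div_eq_sum (i := j + 1) (by omega) hjm
    obtain ⟨k, hkb, hks⟩ := ih (by omega) fun l => c l + c (j + 1) / D * k₀ l
    refine ⟨Function.update k (j + 1) (c (j + 1) % D), fun l hl2 hl => ?_, ?_⟩
    · rcases hl.lt_or_eq with hl | rfl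
      · rw [Function.update_of_ne (by omega)]
        exact hkb l hl2 (by omega)
      · rw [Function.update_self]
        exact Nat.le_sub_one_of_lt (Nat.mod_lt _ (dseq_div_dseq_succ_pos a h1 hj))
    · rw [sum_Icc_succ_eq_sum_add_mul_mod a c k₀ j D hk₀, hks, sum_Icc_succ_top (by omega),
        Function.update_self]
      congr 1
      exact sum_congr rfl fun l hl => by
        rw [Function.update_of_ne ((mem_Icc.mp hl).2.trans_lt j.lt_succ_self).ne]

theorem telescopic_bounded_representation_general
    (m : ℕ) (a : ℕ → ℕ)
    (hpos : ∀ i, 1 ≤ i → i ≤ m → 0 < a i)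
    (htel : Telescopic m a)
    (i : ℕ) (hi2 : 2 ≤ i) (him : i ≤ m) :
    ∃ k : ℕ → ℕ,
      (∀ j, 2 ≤ j → j ≤ i - 1 → k j ≤ dseq a (j - 1) / dseq a j - 1) ∧
      a i * (dseq a (i - 1) / dseq a i) = ∑ j ∈ Finset.Icc 1 (i - 1), a j * k j := by
  obtain ⟨c, hc⟩ := htel.exists_mul_dseq_div_eq_sum hi2 him
  obtain ⟨k, hkb, hks⟩ :=
    htel.exists_bounded_rep (hpos 1 le_rfl (by omega)) (j := i - 1) (by omega) (by omega) c
  exact ⟨k, hkb, hc.trans hks⟩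

/-- For a telescopic sequence and `2 ≤ i ≤ m`, there exist nonnegative integers
`k_1, …, k_{i-1}` with `0 ≤ k_j ≤ d_{j-1}/d_j - 1` for all `2 ≤ j ≤ i-1`
(`k_1` unrestricted) such that `a_i · d_{i-1}/d_i = a_1 k_1 + ⋯ + a_{i-1} k_{i-1}`. -/
theorem telescopic_bounded_representation
    (m : ℕ) (hm : 2 ≤ m) (a : ℕ → ℕ)
    (hpos : ∀ i, 1 ≤ i → i ≤ m → 0 < a i)
    (hgcd : (Finset.Icc 1 m).gcd a = 1)
    (htel : Telescopic m a)
    (i : ℕ) (hi2 : 2 ≤ i) (him : i ≤ m) :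
    ∃ k : ℕ → ℕ,
      (∀ j, 2 ≤ j → j ≤ i - 1 → k j ≤ dseq a (j - 1) / dseq a j - 1) ∧
      a i * (dseq a (i - 1) / dseq a i) = ∑ j ∈ Finset.Icc 1 (i - 1), a j * k j :=
  telescopic_bounded_representation_general m a hpos htel i hi2 him
end

section
/- Let a, b, c be positive integers with gcd(a, c) = 1 and gcd(b, a + c) = 1. Then the sequence (ab, bc, a + c) is telescopic (in particular gcd(ab, bc, a+c) = 1). -/
/-! Since `gcd(a, c) = 1`, the first two terms have gcd `b`, and then the whole gcd is
`gcd(b, a + c) = 1`. So the first condition only asks that `bc / b` be a multiple of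
`ab / ab = 1`, and the second that `a + c` be a non-negative combination of
`ab / b = a` and `bc / b = c`. -/

namespace dseq

theorem succ (s : ℕ → ℕ) (n : ℕ) : dseq s (n + 1) = Nat.gcd (dseq s n) (s (n + 1)) := by
  rw [dseq, ← Finset.insert_Icc_right_eq_Icc_add_one (by omega), Finset.gcd_insert]
  exact Nat.gcd_comm _ _

theorem one (s : ℕ → ℕ) : dseq s 1 = s 1 := by
  simp [dseq]

theorem two (s : ℕ → ℕ) : dseq s 2 = Nat.gcd (s 1) (s 2) := by
  rw [succ, one]

theorem three (s : ℕ → ℕ) : dseq s 3 = Nat.gcd (Nat.gcd (s 1) (s 2)) (s 3) := by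
  rw [succ, two]

end dseq

theorem telescopic_three {s : ℕ → ℕ} (h1 : 0 < s 1)
    (h3 : ∃ x y, s 3 / dseq s 3 = s 1 / dseq s 2 * x + s 2 / dseq s 2 * y) :
    Telescopic 3 s := by
  intro i hi2 hi3
  interval_cases i
  · refine ⟨fun _ => s 2 / dseq s 2, ?_⟩
    simp [dseq.one, Nat.div_self h1]
  · obtain ⟨x, y, hxy⟩ := h3
    refine ⟨fun j => if j = 1 then x else y, ?_⟩
    simp [Finset.sum_Icc_succ_top, hxy]

theorem telescopic_example_abc_general
    (a b c : ℕ) (ha : 0 < a) (hb : 0 < b)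
    (hac : Nat.gcd a c = 1) (hbac : Nat.gcd b (a + c) = 1)
    (s : ℕ → ℕ)
    (hs : s 1 = a * b ∧ s 2 = b * c ∧ s 3 = a + c) :
    (Finset.Icc 1 3).gcd s = 1 ∧ Telescopic 3 s := by
  obtain ⟨h1, h2, h3⟩ := hs
  have hd2 : dseq s 2 = b := by
    rw [dseq.two, h1, h2, mul_comm a, Nat.gcd_mul_left, hac, mul_one]
  have hd3 : dseq s 3 = 1 := by
    rw [dseq.three, ← dseq.two, hd2, h3, hbac]
  refine ⟨hd3, telescopic_three (h1 ▸ Nat.mul_pos ha hb) ⟨1, 1, ?_⟩⟩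
  rw [hd2, hd3, h1, h2, h3, Nat.div_one, Nat.mul_div_cancel a hb, Nat.mul_div_cancel_left c hb]
  ring

/-- For positive integers `a, b, c` with `gcd(a,c) = 1` and `gcd(b,a+c) = 1`,
the sequence `(ab, bc, a+c)` is telescopic; in particular
`gcd(ab, bc, a+c) = 1`. -/
theorem telescopic_example_abc
    (a b c : ℕ) (ha : 0 < a) (hb : 0 < b) (hc : 0 < c)
    (hac : Nat.gcd a c = 1) (hbac : Nat.gcd b (a + c) = 1)
    (s : ℕ → ℕ)
    (hs : s 1 = a * b ∧ s 2 = b * c ∧ s 3 = a + c) :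
    (Finset.Icc 1 3).gcd s = 1 ∧ Telescopic 3 s :=
  telescopic_example_abc_general a b c ha hb hac hbac s hs
end

section
/- Let a > b be positive integers with gcd(a, b) = 1, let m ≥ 2, and set a_i = a^{m−i} b^{i−1} for 1 ≤ i ≤ m. Then the sequence (a_1,…,a_m) is telescopic. -/
open Finset

lemma telescopic_of_dvd {m : ℕ} {s : ℕ → ℕ}
    (h : ∀ i, 2 ≤ i → i ≤ m → s (i - 1) / dseq s (i - 1) ∣ s i / dseq s i) :
    Telescopic m s := by
  intro i hi him
  obtain ⟨c, hc⟩ := h i hi him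
  refine ⟨Pi.single (i - 1) c, ?_⟩
  rw [hc, sum_eq_single_of_mem (i - 1) (by simp only [mem_Icc]; omega)
    fun j _ hj => by simp [hj]]
  simp

lemma gcd_Icc_pow_mul_pow {a b : ℕ} (hab : a.Coprime b) {m i : ℕ} (hi : 1 ≤ i) (him : i ≤ m) :
    (Icc 1 i).gcd (fun j => a ^ (m - j) * b ^ (j - 1)) = a ^ (m - i) := by
  induction i, hi using Nat.le_induction with
  | base => simp
  | succ i hi ih =>
    have hIcc : Icc 1 (i + 1) = insert (i + 1) (Icc 1 i) :=
      (insert_Icc_right_eq_Icc_add_one (by omega)).symm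
    have hexp : m - i = m - (i + 1) + 1 := by omega
    rw [hIcc, gcd_insert, ih (by omega), hexp, pow_succ, Nat.add_sub_cancel]
    change Nat.gcd _ _ = _
    rw [Nat.gcd_mul_left, (hab.symm.pow_left i).gcd_eq_one, mul_one]

lemma dseq_eq_pow_of_eq_pow_mul_pow {a b m : ℕ} (hab : a.Coprime b) {s : ℕ → ℕ}
    (hs : ∀ i, 1 ≤ i → i ≤ m → s i = a ^ (m - i) * b ^ (i - 1)) {i : ℕ} (hi : 1 ≤ i)
    (him : i ≤ m) : dseq s i = a ^ (m - i) := by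
  rw [dseq, gcd_congr rfl fun j hj => hs j (mem_Icc.1 hj).1 ((mem_Icc.1 hj).2.trans him)]
  exact gcd_Icc_pow_mul_pow hab hi him

theorem telescopic_example_geometric_general
    (a b : ℕ) (hab : b < a) (h : Nat.gcd a b = 1)
    (m : ℕ) (hm : 2 ≤ m)
    (s : ℕ → ℕ)
    (hs : ∀ i, 1 ≤ i → i ≤ m → s i = a ^ (m - i) * b ^ (i - 1)) :
    (Finset.Icc 1 m).gcd s = 1 ∧ Telescopic m s := by
  have hd : ∀ {i}, 1 ≤ i → i ≤ m → dseq s i = a ^ (m - i) :=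
    dseq_eq_pow_of_eq_pow_mul_pow h hs
  have hquot : ∀ i, 1 ≤ i → i ≤ m → s i / dseq s i = b ^ (i - 1) := fun i hi him => by
    rw [hs i hi him, hd hi him, Nat.mul_div_cancel_left _ (pow_pos (by omega) _)]
  refine ⟨by simpa [dseq] using hd (by omega : 1 ≤ m) le_rfl, telescopic_of_dvd ?_⟩
  intro i hi him
  rw [hquot i (by omega) him, hquot (i - 1) (by omega) (by omega)]
  exact pow_dvd_pow b (by omega)

/-- For coprime positive integers `a > b` and `m ≥ 2`, the sequence
`a_i = a^{m-i} b^{i-1}` (`1 ≤ i ≤ m`) is telescopic; in particular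
`gcd(a_1, …, a_m) = 1`. -/
theorem telescopic_example_geometric
    (a b : ℕ) (hb : 0 < b) (hab : b < a) (h : Nat.gcd a b = 1)
    (m : ℕ) (hm : 2 ≤ m)
    (s : ℕ → ℕ)
    (hs : ∀ i, 1 ≤ i → i ≤ m → s i = a ^ (m - i) * b ^ (i - 1)) :
    (Finset.Icc 1 m).gcd s = 1 ∧ Telescopic m s :=
  telescopic_example_geometric_general a b hab h m hm s hs
end

section
/- Let k ≥ 2 be an even integer and let S be the numerical semigroup generated by 2k, 2k+2, and 2k+1. Then the number of gaps of S (the cardinality of ℤ_{≥0} \ S) equals k². -/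
/-!
A sum of `t` generators taken from `a, a + 1, a + 2` can be any number in `[a t, a t + 2 t]`, so the
semigroup is the union of these blocks. Its gaps are the open intervals `(a t + 2 t, a (t + 1))`
between consecutive blocks, of length `a - (2 t + 1)`. For `a = 2 k` these lengths are the odd
numbers `2 k - 1, 2 k - 3, …, 1`, which add up to `k²`.
-/

open Finset

theorem exists_eq_mul_add_mul_add_mul_iff (a n : ℕ) :
    (∃ x y z : ℕ, n = a * x + (a + 2) * y + (a + 1) * z) ↔
      ∃ t, n ∈ Set.Icc (a * t) (a * t + 2 * t) := by
  constructor
  · rintro ⟨x, y, z, rfl⟩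
    exact ⟨x + y + z, by constructor <;> nlinarith⟩
  · rintro ⟨t, ht⟩
    obtain ⟨r, rfl⟩ := Nat.exists_eq_add_of_le ht.1
    obtain ⟨q, m, rfl, hm⟩ : ∃ q m, r = 2 * q + m ∧ m ≤ 1 :=
      ⟨r / 2, r % 2, (Nat.div_add_mod r 2).symm, by omega⟩
    obtain ⟨s, rfl⟩ : ∃ s, t = s + (q + m) := ⟨t - (q + m), by simp only [Set.mem_Icc] at ht; omega⟩
    exact ⟨s, q, m, by ring⟩

theorem not_exists_mem_Icc_iff_exists_mem_Ioo (a n : ℕ) :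
    (¬ ∃ t, n ∈ Set.Icc (a * t) (a * t + 2 * t)) ↔
      ∃ t, n ∈ Set.Ioo (a * t + 2 * t) (a * t + a) := by
  simp only [Set.mem_Icc, Set.mem_Ioo, not_exists, not_and, not_le]
  constructor
  · intro h
    have ha : 0 < a := Nat.pos_of_ne_zero fun ha => by
      subst ha
      have := h n (by simp)
      omega
    refine ⟨n / a, h _ (Nat.mul_div_le n a), ?_⟩
    have := Nat.lt_mul_div_succ n ha
    linarith [Nat.mul_succ a (n / a)]
  · rintro ⟨t, hlo, hhi⟩ s hs
    rcases le_or_gt s t with hst | hts <;> nlinarith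

theorem card_biUnion_Ioo (a : ℕ) :
    ((range a).biUnion fun t => Ioo (a * t + 2 * t) (a * t + a)).card =
      ∑ t ∈ range a, (a - (2 * t + 1)) := by
  rw [card_biUnion]
  · refine sum_congr rfl fun t _ => ?_
    rw [Nat.card_Ioo]
    omega
  · intro s _ t _ hst
    refine disjoint_left.2 fun n hs ht => hst ?_
    rw [mem_Ioo] at hs ht
    apply le_antisymm <;> by_contra! h <;> nlinarith

theorem sum_range_two_mul_sub_odd (k : ℕ) :
    ∑ t ∈ range (2 * k), (2 * k - (2 * t + 1)) = k ^ 2 := by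
  induction k with
  | zero => simp
  | succ k ih =>
    rw [show 2 * (k + 1) = 2 * k + 1 + 1 by ring, sum_range_succ', sum_range_succ]
    have hshift : ∀ t ∈ range (2 * k),
        2 * k + 1 + 1 - (2 * (t + 1) + 1) = 2 * k - (2 * t + 1) := fun t _ => by omega
    rw [sum_congr rfl hshift, ih, add_sq]
    omega

theorem setOf_not_exists_eq_biUnion_Ioo (a : ℕ) :
    {n : ℕ | ¬ ∃ x y z : ℕ, n = a * x + (a + 2) * y + (a + 1) * z} =
      ↑((range a).biUnion fun t => Ioo (a * t + 2 * t) (a * t + a)) := by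
  ext n
  simp only [Set.mem_ofPred_eq, exists_eq_mul_add_mul_add_mul_iff,
    not_exists_mem_Icc_iff_exists_mem_Ioo, Set.mem_Ioo, coe_biUnion, mem_coe, mem_range,
    coe_Ioo, Set.mem_iUnion, exists_prop]
  refine exists_congr fun t => ⟨fun ht => ⟨?_, ht⟩, And.right⟩
  omega

theorem gaps_count_2k_2k2_2k1_general
    (k : ℕ) :
    Set.ncard {n : ℕ | ¬ ∃ x y z : ℕ,
        n = (2 * k) * x + (2 * k + 2) * y + (2 * k + 1) * z} = k ^ 2 := by
  rw [setOf_not_exists_eq_biUnion_Ioo, Set.ncard_coe_finset, card_biUnion_Ioo,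
    sum_range_two_mul_sub_odd]

/-- For an even integer `k ≥ 2`, the numerical semigroup generated by
`2k, 2k+2, 2k+1` has exactly `k²` gaps. -/
theorem gaps_count_2k_2k2_2k1
    (k : ℕ) (hk : 2 ≤ k) (hke : Even k) :
    Set.ncard {n : ℕ | ¬ ∃ x y z : ℕ,
        n = (2 * k) * x + (2 * k + 2) * y + (2 * k + 1) * z} = k ^ 2 :=
  gaps_count_2k_2k2_2k1_general k
end

section
/- Let a, b, c be positive integers with a ≥ 2, gcd(a, c) = 1 and gcd(b, a + c) = 1, and let S be the numerical semigroup generated by ab, bc, and a + c. Then the number of gaps of S (the cardinality of ℤ_{≥0} \ S) equals (1 + abc − a − c)/2. -/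
section Aux

variable {A B C : ℤ}

/-- Existence of the normal form. -/
lemma nf_exists (hA : 0 < A) (hB : 0 < B)
    (h1 : IsCoprime C A) (h2 : IsCoprime (A + C) B) (n : ℤ) :
    ∃ x y z : ℤ, 0 ≤ y ∧ y < A ∧ 0 ≤ z ∧ z < B ∧
      n = A * B * x + B * C * y + (A + C) * z := by
  obtain ⟨u, v, huv⟩ := h2
  set z := (n * u) % B with hzdef
  have hz0 : 0 ≤ z := Int.emod_nonneg _ (by omega)
  have hzB : z < B := Int.emod_lt_of_pos _ hB
  have hq : n * u = B * (n * u / B) + z := (Int.mul_ediv_add_emod (n*u) B).symm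
  have hd : B ∣ n - (A + C) * z := by
    refine ⟨n * v + (A + C) * (n * u / B), ?_⟩
    have hz : z = n * u - B * (n * u / B) := by omega
    calc n - (A + C) * z = n * (u * (A + C) + v * B) - (A + C) * z := by rw [huv]; ring
      _ = _ := by rw [hz]; ring
  obtain ⟨m, hm⟩ := hd
  obtain ⟨p, q, hpq⟩ := h1
  set y := (m * p) % A with hydef
  have hy0 : 0 ≤ y := Int.emod_nonneg _ (by omega)
  have hyA : y < A := Int.emod_lt_of_pos _ hA
  have hq2 : m * p = A * (m * p / A) + y := (Int.mul_ediv_add_emod (m*p) A).symm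
  have hd2 : A ∣ m - C * y := by
    refine ⟨m * q + C * (m * p / A), ?_⟩
    have hy : y = m * p - A * (m * p / A) := by omega
    calc m - C * y = m * (p * C + q * A) - C * y := by rw [hpq]; ring
      _ = _ := by rw [hy]; ring
  obtain ⟨x, hx⟩ := hd2
  refine ⟨x, y, z, hy0, hyA, hz0, hzB, ?_⟩
  linear_combination hm + B * hx

/-- Uniqueness of the `x`-coordinate of the normal form. -/
lemma nf_unique (hA : 0 < A) (hB : 0 < B)
    (h1 : IsCoprime C A) (h2 : IsCoprime (A + C) B)
    {x y z x' y' z' : ℤ}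
    (hy : 0 ≤ y) (hyA : y < A) (hz : 0 ≤ z) (hzB : z < B)
    (hy' : 0 ≤ y') (hyA' : y' < A) (hz' : 0 ≤ z') (hzB' : z' < B)
    (h : A * B * x + B * C * y + (A + C) * z
        = A * B * x' + B * C * y' + (A + C) * z') :
    x = x' ∧ y = y' ∧ z = z' := by
  have hdz : B ∣ z - z' := by
    have hd : B ∣ (A + C) * (z - z') := ⟨A * (x' - x) + C * (y' - y), by linarith [h]⟩
    exact (IsCoprime.dvd_of_dvd_mul_left (h2.symm) hd)
  have hzz : z = z' := by
    obtain ⟨k, hk⟩ := hdz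
    rcases lt_trichotomy k 0 with hk0 | hk0 | hk0
    · nlinarith
    · rw [hk0, mul_zero] at hk; omega
    · nlinarith
  subst hzz
  have hdy : A ∣ y - y' := by
    have hB' : (B : ℤ) ≠ 0 := by omega
    have hmul : B * (C * (y - y')) = B * (A * (x' - x)) := by linarith [h]
    have h3 : C * (y - y') = A * (x' - x) := mul_left_cancel₀ hB' hmul
    exact (IsCoprime.dvd_of_dvd_mul_left (h1.symm) ⟨x' - x, h3⟩)
  have hyy : y = y' := by
    obtain ⟨k, hk⟩ := hdy
    rcases lt_trichotomy k 0 with hk0 | hk0 | hk0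
    · nlinarith
    · rw [hk0, mul_zero] at hk; omega
    · nlinarith
  subst hyy
  refine ⟨?_, rfl, rfl⟩
  have : A * B * x = A * B * x' := by linarith
  exact mul_left_cancel₀ (by positivity) this

/-- Reduction of a nonnegative representation to normal form. -/
lemma nf_reduce (hA : 0 < A) (hB : 0 < B) (hC : 0 < C)
    {X Y Z : ℤ} (hX : 0 ≤ X) (hY : 0 ≤ Y) (hZ : 0 ≤ Z) :
    ∃ x y z : ℤ, 0 ≤ x ∧ 0 ≤ y ∧ y < A ∧ 0 ≤ z ∧ z < B ∧
      A * B * X + B * C * Y + (A + C) * Z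
        = A * B * x + B * C * y + (A + C) * z := by
  obtain ⟨z, hzdef⟩ : ∃ z, z = Z % B := ⟨_, rfl⟩
  obtain ⟨k, hkdef⟩ : ∃ k, k = Z / B := ⟨_, rfl⟩
  have hk : 0 ≤ k := hkdef ▸ Int.ediv_nonneg hZ (by omega)
  have hZeq : Z = B * k + z := by rw [hkdef, hzdef]; exact (Int.mul_ediv_add_emod Z B).symm
  have hz0 : 0 ≤ z := hzdef ▸ Int.emod_nonneg _ (by omega)
  have hzB : z < B := hzdef ▸ Int.emod_lt_of_pos _ hB
  obtain ⟨y, hydef⟩ : ∃ y, y = (Y + k) % A := ⟨_, rfl⟩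
  obtain ⟨j, hjdef⟩ : ∃ j, j = (Y + k) / A := ⟨_, rfl⟩
  have hj : 0 ≤ j := hjdef ▸ Int.ediv_nonneg (by omega) (by omega)
  have hYeq : Y + k = A * j + y := by
    rw [hjdef, hydef]; exact (Int.mul_ediv_add_emod (Y + k) A).symm
  have hy0 : 0 ≤ y := hydef ▸ Int.emod_nonneg _ (by omega)
  have hyA : y < A := hydef ▸ Int.emod_lt_of_pos _ hA
  refine ⟨X + k + C * j, y, z,
    add_nonneg (add_nonneg hX hk) (mul_nonneg hC.le hj), hy0, hyA, hz0, hzB, ?_⟩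
  linear_combination (A + C) * hZeq + B * C * hYeq

/-- Membership of the nonnegative cone in terms of the normal form. -/
lemma nf_mem (hA : 0 < A) (hB : 0 < B) (hC : 0 < C)
    (h1 : IsCoprime C A) (h2 : IsCoprime (A + C) B)
    {n x y z : ℤ} (hy0 : 0 ≤ y) (hyA : y < A) (hz0 : 0 ≤ z) (hzB : z < B)
    (heq : n = A * B * x + B * C * y + (A + C) * z) :
    (∃ X Y Z : ℤ, 0 ≤ X ∧ 0 ≤ Y ∧ 0 ≤ Z ∧
        n = A * B * X + B * C * Y + (A + C) * Z) ↔ 0 ≤ x := by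
  constructor
  · rintro ⟨X, Y, Z, hX, hY, hZ, hn⟩
    obtain ⟨x', y', z', hx', hy0', hyA', hz0', hzB', heq'⟩ :=
      nf_reduce hA hB hC hX hY hZ
    obtain ⟨e1, e2, e3⟩ := nf_unique hA hB h1 h2 hy0 hyA hz0 hzB hy0' hyA' hz0' hzB'
      (heq.symm.trans (hn.trans heq'))
    omega
  · intro hx; exact ⟨x, y, z, hx, hy0, hz0, heq⟩

end Aux

/-- For positive integers `a, b, c` with `a ≥ 2`, `gcd(a,c) = 1` and
`gcd(b,a+c) = 1`, the numerical semigroup generated by `ab, bc, a+c` has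
exactly `(1 + abc - a - c)/2` gaps. -/
theorem gaps_count_ab_bc_ac
    (a b c : ℕ) (ha : 2 ≤ a) (hb : 0 < b) (hc : 0 < c)
    (hac : Nat.gcd a c = 1) (hbac : Nat.gcd b (a + c) = 1) :
    2 * (Set.ncard {n : ℕ | ¬ ∃ x y z : ℕ,
        n = (a * b) * x + (b * c) * y + (a + c) * z} : ℤ)
      = 1 + (a : ℤ) * b * c - a - c := by
  classical
  have hA : 0 < (a : ℤ) := by exact_mod_cast (by omega : 0 < a)
  have hB : 0 < (b : ℤ) := by exact_mod_cast hb
  have hC : 0 < (c : ℤ) := by exact_mod_cast hc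
  have h1 : IsCoprime (c : ℤ) (a : ℤ) := by
    rw [Int.isCoprime_iff_gcd_eq_one, Int.gcd_natCast_natCast]
    exact Nat.coprime_comm.mp hac
  have h2 : IsCoprime ((a : ℤ) + c) (b : ℤ) := by
    have h : ((a : ℤ) + c) = ((a + c : ℕ) : ℤ) := by push_cast; ring
    rw [Int.isCoprime_iff_gcd_eq_one, h, Int.gcd_natCast_natCast]
    exact Nat.coprime_comm.mp hbac
  obtain ⟨F, hF⟩ : ∃ F : ℤ, F = (a : ℤ) * b * c - a - c := ⟨_, rfl⟩
  -- the integer membership predicate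
  let inS : ℤ → Prop := fun n => ∃ X Y Z : ℤ, 0 ≤ X ∧ 0 ≤ Y ∧ 0 ≤ Z ∧
      n = (a : ℤ) * b * X + (b : ℤ) * c * Y + ((a : ℤ) + c) * Z
  -- symmetry
  have sym : ∀ n : ℤ, inS n ↔ ¬ inS (F - n) := by
    intro n
    obtain ⟨x, y, z, hy0, hyA, hz0, hzB, heq⟩ := nf_exists hA hB h1 h2 n
    have e1 : inS n ↔ 0 ≤ x := nf_mem hA hB hC h1 h2 hy0 hyA hz0 hzB heq
    have heq2 : F - n = (a : ℤ) * b * (-1 - x) + (b : ℤ) * c * ((a : ℤ) - 1 - y)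
        + ((a : ℤ) + c) * ((b : ℤ) - 1 - z) := by rw [hF, heq]; ring
    have e2 : inS (F - n) ↔ 0 ≤ (-1 - x) :=
      nf_mem hA hB hC h1 h2 (by omega) (by omega) (by omega) (by omega) heq2
    rw [e1, e2]; omega
  -- everything beyond F is in S
  have large : ∀ n : ℤ, F < n → inS n := by
    intro n hn
    obtain ⟨x, y, z, hy0, hyA, hz0, hzB, heq⟩ := nf_exists hA hB h1 h2 n
    have e1 : inS n ↔ 0 ≤ x := nf_mem hA hB hC h1 h2 hy0 hyA hz0 hzB heq
    rw [e1]
    by_contra hx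
    have key : F - n = (a : ℤ) * b * (-1 - x) + (b : ℤ) * c * ((a : ℤ) - 1 - y)
        + ((a : ℤ) + c) * ((b : ℤ) - 1 - z) := by rw [hF, heq]; ring
    have t1 : 0 ≤ (a : ℤ) * b * (-1 - x) :=
      mul_nonneg (by positivity) (by omega)
    have t2 : 0 ≤ (b : ℤ) * c * ((a : ℤ) - 1 - y) :=
      mul_nonneg (by positivity) (by omega)
    have t3 : 0 ≤ ((a : ℤ) + c) * ((b : ℤ) - 1 - z) :=
      mul_nonneg (by omega) (by omega)
    omega
  -- bridge between ℕ-representations and inS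
  have bridge : ∀ n : ℕ,
      (∃ x y z : ℕ, n = (a * b) * x + (b * c) * y + (a + c) * z) ↔ inS (n : ℤ) := by
    intro n
    constructor
    · rintro ⟨x, y, z, h⟩
      exact ⟨x, y, z, by positivity, by positivity, by positivity, by
        exact_mod_cast congrArg (Nat.cast : ℕ → ℤ) h⟩
    · rintro ⟨X, Y, Z, hX, hY, hZ, h⟩
      refine ⟨X.toNat, Y.toNat, Z.toNat, ?_⟩
      have hX' : (X.toNat : ℤ) = X := Int.toNat_of_nonneg hX
      have hY' : (Y.toNat : ℤ) = Y := Int.toNat_of_nonneg hY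
      have hZ' : (Z.toNat : ℤ) = Z := Int.toNat_of_nonneg hZ
      have : (n : ℤ) = (((a * b) * X.toNat + (b * c) * Y.toNat
          + (a + c) * Z.toNat : ℕ) : ℤ) := by push_cast [hX', hY', hZ']; linarith [h]
      exact_mod_cast this
  have hF1 : 0 ≤ F + 1 := by
    have e : F + 1 = (a : ℤ) * c * ((b : ℤ) - 1) + ((a : ℤ) - 1) * ((c : ℤ) - 1) := by
      rw [hF]; ring
    have t1 : 0 ≤ (a : ℤ) * c * ((b : ℤ) - 1) := mul_nonneg (by positivity) (by omega)
    have t2 : 0 ≤ ((a : ℤ) - 1) * ((c : ℤ) - 1) := mul_nonneg (by omega) (by omega)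
    omega
  obtain ⟨N, hNdef⟩ : ∃ N : ℕ, N = (F + 1).toNat := ⟨_, rfl⟩
  have hN : (N : ℤ) = F + 1 := by rw [hNdef]; exact Int.toNat_of_nonneg hF1
  set P : ℕ → Prop := fun n => ¬ ∃ x y z : ℕ,
      n = (a * b) * x + (b * c) * y + (a + c) * z with hP
  have hsetG : {n : ℕ | ¬ ∃ x y z : ℕ,
      n = (a * b) * x + (b * c) * y + (a + c) * z}
      = ↑((Finset.range N).filter P) := by
    ext n
    simp only [Set.mem_setOf_eq, Finset.coe_filter, Finset.mem_range, Set.mem_setOf_eq, hP]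
    constructor
    · intro h
      refine ⟨?_, h⟩
      by_contra hn
      have hc1 : (N : ℤ) ≤ (n : ℤ) := by exact_mod_cast not_lt.mp hn
      exact h ((bridge n).mpr (large _ (by omega)))
    · exact fun h => h.2
  rw [hsetG, Set.ncard_coe_finset]
  have hcards : ((Finset.range N).filter P).card
      = ((Finset.range N).filter (fun n => ¬ P n)).card := by
    refine Finset.card_bij (fun n _ => (F - (n : ℤ)).toNat) ?_ ?_ ?_
    · intro n hn
      simp only [Finset.mem_filter, Finset.mem_range] at hn ⊢
      obtain ⟨hn1, hn2⟩ := hn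
      have hc1 : (n : ℤ) < N := by exact_mod_cast hn1
      have hnS : ¬ inS (n : ℤ) := fun h => hn2 ((bridge n).mpr h)
      have hFS : inS (F - (n : ℤ)) := by
        by_contra hcon
        exact hnS ((sym n).mpr hcon)
      have ht : ((F - (n : ℤ)).toNat : ℤ) = F - (n : ℤ) :=
        Int.toNat_of_nonneg (by omega)
      refine ⟨by omega, ?_⟩
      intro hcon
      exact hcon ((bridge _).mpr (by rw [ht]; exact hFS))
    · intro n hn m hm h
      simp only [Finset.mem_filter, Finset.mem_range] at hn hm
      obtain ⟨hn1, -⟩ := hn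
      obtain ⟨hm1, -⟩ := hm
      have hc1 : (n : ℤ) < N := by exact_mod_cast hn1
      have hc2 : (m : ℤ) < N := by exact_mod_cast hm1
      have h' : (F - (n : ℤ)).toNat = (F - (m : ℤ)).toNat := h
      omega
    · intro m hm
      simp only [Finset.mem_filter, Finset.mem_range] at hm
      obtain ⟨hm1, hm2⟩ := hm
      have hc1 : (m : ℤ) < N := by exact_mod_cast hm1
      have hmS : inS (m : ℤ) := (bridge m).mp (not_not.mp hm2)
      have hFm : ¬ inS (F - (m : ℤ)) := (sym m).mp hmS
      have ht : ((F - (m : ℤ)).toNat : ℤ) = F - (m : ℤ) :=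
        Int.toNat_of_nonneg (by omega)
      refine ⟨(F - (m : ℤ)).toNat, ?_, ?_⟩
      · simp only [Finset.mem_filter, Finset.mem_range]
        refine ⟨by omega, ?_⟩
        intro hcon
        exact hFm (by rw [← ht]; exact (bridge _).mp hcon)
      · show (F - ((F - (m : ℤ)).toNat : ℤ)).toNat = m
        omega
  have hsum := Finset.card_filter_add_card_filter_not
    (s := Finset.range N) (p := P)
  rw [Finset.card_range] at hsum
  have h2card : 2 * ((Finset.range N).filter P).card = N := by omega
  have : 2 * ((((Finset.range N).filter P).card : ℕ) : ℤ) = (N : ℤ) := by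
    exact_mod_cast congrArg (Nat.cast : ℕ → ℤ) h2card
  rw [this, hN, hF]; ring
end

section
/- Let a > b be positive integers with gcd(a, b) = 1, let m ≥ 2, set a_i = a^{m−i} b^{i−1} for 1 ≤ i ≤ m, and let S be the numerical semigroup generated by a_1,…,a_m. Then the number of gaps of S (the cardinality of ℤ_{≥0} \ S) equals (a − b + (b − 1)a^m − (a − 1)b^m)/(2(a − b)). -/
/-!
The semigroups `S_m` generated by `a^{m-i} b^{i-1}` are obtained by iterated gluing:
`S_{m+1} = a S_m + b^m ℕ`, starting from `S_1 = ℕ`, and `S_m` is closed under adding `b^m`.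
For `S` closed under adding `c` with `gcd(a, c) = 1`, every residue class mod `a` is `c t + aℕ`
for a unique `t < a`, and `c t + a q` lies in `aS + cℕ` exactly when `q ∈ S`; the `⌊ct/a⌋`
smaller members of the class are gaps as well. So `aS + cℕ` has `a g(S) + ∑_{t<a} ⌊ct/a⌋` gaps,
and `∑_{t<a} ⌊ct/a⌋ = (a-1)(c-1)/2`. Solving the resulting recursion for `g(S_m)` gives the formula.
-/

open Finset

namespace Nat.Coprime

variable {a c : ℕ}

theorem injOn_mul_mod (hac : a.Coprime c) : Set.InjOn (fun t => c * t % a) (Set.Iio a) :=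
  fun t ht t' ht' he => by
    simpa [Nat.ModEq, Nat.mod_eq_of_lt ht, Nat.mod_eq_of_lt ht'] using
      Nat.ModEq.cancel_left_of_coprime (hac : a.gcd c = 1) he

theorem image_mul_mod_range (hac : a.Coprime c) :
    (range a).image (fun t => c * t % a) = range a := by
  refine eq_of_subset_of_card_le (fun r hr => ?_) ?_
  · obtain ⟨t, ht, rfl⟩ := mem_image.mp hr
    exact mem_range.mpr (Nat.mod_lt _ (Nat.zero_lt_of_lt (mem_range.mp ht)))
  · exact (Finset.card_image_of_injOn (by simpa using hac.injOn_mul_mod)).ge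

theorem exists_lt_mul_modEq (hac : a.Coprime c) (ha : 0 < a) (n : ℕ) :
    ∃ t < a, c * t ≡ n [MOD a] := by
  have hn : n % a ∈ (range a).image (fun t => c * t % a) := by
    rw [hac.image_mul_mod_range]
    exact mem_range.mpr (Nat.mod_lt _ ha)
  obtain ⟨t, ht, he⟩ := mem_image.mp hn
  exact ⟨t, mem_range.mp ht, he⟩

/-- `2 ∑_{t<a} ⌊ct/a⌋ = (a - 1)(c - 1)`, written without subtraction. -/
theorem two_mul_sum_mul_div_add (hac : a.Coprime c) (ha : 0 < a) :
    2 * ∑ t ∈ range a, c * t / a + (a + c) = a * c + 1 := by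
  set D := ∑ t ∈ range a, c * t / a
  have hmod : ∑ t ∈ range a, c * t % a = ∑ t ∈ range a, t := by
    conv_rhs => rw [← hac.image_mul_mod_range]
    rw [sum_image (by simpa using hac.injOn_mul_mod)]
  have hsplit : c * ∑ t ∈ range a, t = a * D + ∑ t ∈ range a, t := by
    rw [mul_sum, mul_sum, ← hmod, ← sum_add_distrib]
    exact sum_congr rfl fun t _ => (Nat.div_add_mod _ _).symm
  have hgauss := sum_range_id_mul_two a
  obtain ⟨a, rfl⟩ : ∃ a', a = a' + 1 := ⟨a - 1, by omega⟩
  rw [Nat.add_sub_cancel] at hgauss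
  have : (a + 1) * (c * a) = (a + 1) * (2 * D + a) :=
    calc (a + 1) * (c * a) = c * ((∑ t ∈ range (a + 1), t) * 2) := by rw [hgauss]; ring
      _ = 2 * (c * ∑ t ∈ range (a + 1), t) := by ring
      _ = (a + 1) * (2 * D + a) := by rw [hsplit]; linarith
  nlinarith [Nat.eq_of_mul_eq_mul_left (Nat.succ_pos a) this]

end Nat.Coprime

namespace Telescopic

def glue (a c : ℕ) (S : Set ℕ) : Set ℕ := {n | ∃ s ∈ S, ∃ t, n = a * s + c * t}

variable {a c : ℕ} {S : Set ℕ}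

theorem add_mul_mem_glue {n : ℕ} (hn : n ∈ glue a c S) (k : ℕ) : n + c * k ∈ glue a c S := by
  obtain ⟨s, hs, t, rfl⟩ := hn
  exact ⟨s, hs, t + k, by ring⟩

theorem add_mul_mem_of_forall_add_mem (hS : ∀ s ∈ S, s + c ∈ S) {s : ℕ} (hs : s ∈ S) (k : ℕ) :
    s + c * k ∈ S := by
  induction k with
  | zero => simpa using hs
  | succ k ih => simpa [mul_add, ← add_assoc] using hS _ ih

theorem mem_glue_iff_of_modEq (hac : a.Coprime c) (ha : 0 < a) (hS : ∀ s ∈ S, s + c ∈ S)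
    {n t : ℕ} (ht : t < a) (hn : c * t ≡ n [MOD a]) :
    n ∈ glue a c S ↔ c * t ≤ n ∧ (n - c * t) / a ∈ S := by
  constructor
  · rintro ⟨s, hs, t', rfl⟩
    have hdecomp : a * s + c * t' = a * (s + c * (t' / a)) + c * (t' % a) := by
      conv_lhs => rw [← Nat.div_add_mod t' a]
      ring
    have htt : t' % a = t := hac.injOn_mul_mod (Nat.mod_lt _ ha) ht <| by
      have : c * (t' % a) ≡ a * s + c * t' [MOD a] := by
        rw [hdecomp, Nat.ModEq, Nat.mul_add_mod]
      exact this.trans hn.symm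
    rw [hdecomp, htt, Nat.add_sub_cancel, Nat.mul_div_cancel_left _ ha]
    exact ⟨Nat.le_add_left _ _, add_mul_mem_of_forall_add_mem hS hs _⟩
  · rintro ⟨hle, hq⟩
    obtain ⟨q, hq'⟩ := (Nat.modEq_iff_dvd' hle).mp hn
    rw [hq', Nat.mul_div_cancel_left _ ha] at hq
    exact ⟨q, hq, t, by omega⟩

/-- The gaps of `glue a c S` in the residue class of `c * t`, where `G` holds the gaps of `S`. -/
def glueGapsClass (a c : ℕ) (G : Finset ℕ) (t : ℕ) : Finset ℕ :=
  (range (c * t / a)).image (fun k => c * t % a + a * k) ∪ G.image (fun q => c * t + a * q)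

def glueGaps (a c : ℕ) (G : Finset ℕ) : Finset ℕ :=
  (range a).biUnion (glueGapsClass a c G)

theorem modEq_of_mem_glueGapsClass {G : Finset ℕ} {t n : ℕ} (hn : n ∈ glueGapsClass a c G t) :
    c * t ≡ n [MOD a] := by
  rcases mem_union.mp hn with hn | hn
  · obtain ⟨k, -, rfl⟩ := mem_image.mp hn
    simp [Nat.ModEq, Nat.add_mul_mod_self_left]
  · obtain ⟨q, -, rfl⟩ := mem_image.mp hn
    simp [Nat.ModEq, Nat.add_mul_mod_self_left]

theorem mem_glueGapsClass_iff (ha : 0 < a) {G : Finset ℕ} {t n : ℕ} (hn : c * t ≡ n [MOD a]) :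
    n ∈ glueGapsClass a c G t ↔ n < c * t ∨ c * t ≤ n ∧ (n - c * t) / a ∈ G := by
  have hct := Nat.mod_add_div (c * t) a
  simp only [glueGapsClass, mem_union, mem_image, mem_range]
  constructor
  · rintro (⟨k, hk, rfl⟩ | ⟨q, hq, rfl⟩)
    · left
      have : a * k < a * (c * t / a) := Nat.mul_lt_mul_of_pos_left hk ha
      omega
    · right
      simpa [Nat.mul_div_cancel_left _ ha] using hq
  · rintro (hlt | ⟨hle, hq⟩)
    · left
      have hn' := Nat.mod_add_div n a
      have hmod : c * t % a = n % a := hn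
      refine ⟨n / a, Nat.lt_of_mul_lt_mul_left (a := a) (by omega), by rw [hn]; omega⟩
    · right
      obtain ⟨q, hq'⟩ := (Nat.modEq_iff_dvd' hle).mp hn
      rw [hq', Nat.mul_div_cancel_left _ ha] at hq
      exact ⟨q, hq, by omega⟩

theorem card_glueGapsClass (ha : 0 < a) (G : Finset ℕ) (t : ℕ) :
    (glueGapsClass a c G t).card = c * t / a + G.card := by
  have hct := Nat.mod_add_div (c * t) a
  rw [glueGapsClass, card_union_of_disjoint, card_image_of_injective, card_image_of_injective,
    card_range]
  · exact fun q q' h => Nat.eq_of_mul_eq_mul_left ha (by simpa using h)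
  · exact fun k k' h => Nat.eq_of_mul_eq_mul_left ha (by simpa using h)
  · refine disjoint_left.mpr fun n hn hn' => ?_
    obtain ⟨k, hk, rfl⟩ := mem_image.mp hn
    obtain ⟨q, -, hq⟩ := mem_image.mp hn'
    have : a * k < a * (c * t / a) := Nat.mul_lt_mul_of_pos_left (mem_range.mp hk) ha
    omega

theorem coe_glueGaps (hac : a.Coprime c) (ha : 0 < a) (hS : ∀ s ∈ S, s + c ∈ S) {G : Finset ℕ}
    (hG : (G : Set ℕ) = Sᶜ) : (glueGaps a c G : Set ℕ) = (glue a c S)ᶜ := by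
  ext n
  obtain ⟨t, ht, hn⟩ := hac.exists_lt_mul_modEq ha n
  have hGS : (n - c * t) / a ∈ G ↔ (n - c * t) / a ∉ S := by
    rw [← mem_coe, hG, Set.mem_compl_iff]
  simp only [glueGaps, coe_biUnion, coe_range, Set.mem_iUnion, mem_coe, Set.mem_compl_iff,
    mem_glue_iff_of_modEq hac ha hS ht hn, exists_prop]
  constructor
  · rintro ⟨t', ht', hn'⟩
    obtain rfl : t' = t := hac.injOn_mul_mod ht' ht
      ((modEq_of_mem_glueGapsClass hn').trans hn.symm)
    rw [mem_glueGapsClass_iff ha hn, hGS, ← not_le] at hn'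
    tauto
  · intro hnS
    refine ⟨t, ht, (mem_glueGapsClass_iff ha hn).mpr ?_⟩
    rw [hGS, ← not_le]
    tauto

theorem card_glueGaps (hac : a.Coprime c) (ha : 0 < a) (G : Finset ℕ) :
    2 * (glueGaps a c G).card + (a + c) = 2 * a * G.card + a * c + 1 := by
  have hdisj : (range a : Set ℕ).PairwiseDisjoint (glueGapsClass a c G) :=
    fun t ht t' ht' hne => disjoint_left.mpr fun n hn hn' => hne <|
      hac.injOn_mul_mod (by simpa using ht) (by simpa using ht')
        ((modEq_of_mem_glueGapsClass hn).trans (modEq_of_mem_glueGapsClass hn').symm)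
  rw [glueGaps, card_biUnion hdisj]
  simp only [card_glueGapsClass ha, sum_add_distrib, sum_const, card_range, smul_eq_mul]
  linarith [hac.two_mul_sum_mul_div_add ha]

theorem finite_compl_glue_and_ncard (hac : a.Coprime c) (ha : 0 < a) (hS : ∀ s ∈ S, s + c ∈ S)
    (hfin : Sᶜ.Finite) :
    (glue a c S)ᶜ.Finite ∧ 2 * (glue a c S)ᶜ.ncard + (a + c) = 2 * a * Sᶜ.ncard + a * c + 1 := by
  rw [← coe_glueGaps hac ha hS hfin.coe_toFinset, Set.ncard_coe_finset,
    Set.ncard_eq_toFinset_card _ hfin]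
  exact ⟨finite_toSet _, card_glueGaps hac ha _⟩

def geomSemigroup (a b m : ℕ) : Set ℕ :=
  {n | ∃ x : ℕ → ℕ, n = ∑ i ∈ Icc 1 m, a ^ (m - i) * b ^ (i - 1) * x i}

theorem sum_Icc_succ_geom (a b m : ℕ) (x : ℕ → ℕ) :
    ∑ i ∈ Icc 1 (m + 1), a ^ (m + 1 - i) * b ^ (i - 1) * x i
      = a * ∑ i ∈ Icc 1 m, a ^ (m - i) * b ^ (i - 1) * x i + b ^ m * x (m + 1) := by
  rw [sum_Icc_succ_top (by omega), mul_sum, Nat.add_sub_cancel, Nat.sub_self, pow_zero, one_mul]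
  congr 1
  refine sum_congr rfl fun i hi => ?_
  rw [show m + 1 - i = m - i + 1 by simp only [mem_Icc] at hi; omega, pow_succ]
  ring

theorem geomSemigroup_succ (a b m : ℕ) :
    geomSemigroup a b (m + 1) = glue a (b ^ m) (geomSemigroup a b m) := by
  ext n
  constructor
  · rintro ⟨x, rfl⟩
    exact ⟨_, ⟨x, rfl⟩, x (m + 1), sum_Icc_succ_geom a b m x⟩
  · rintro ⟨_, ⟨x, rfl⟩, t, rfl⟩
    refine ⟨Function.update x (m + 1) t, ?_⟩
    rw [sum_Icc_succ_geom, Function.update_self]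
    congr 2
    refine sum_congr rfl fun i hi => ?_
    rw [Function.update_of_ne (by simp only [mem_Icc] at hi; omega)]

theorem geomSemigroup_one (a b : ℕ) : geomSemigroup a b 1 = Set.univ :=
  Set.eq_univ_of_forall fun n => ⟨fun _ => n, by simp⟩

theorem add_pow_mem_geomSemigroup {a b m n : ℕ} (hm : 1 ≤ m) (hn : n ∈ geomSemigroup a b m) :
    n + b ^ m ∈ geomSemigroup a b m := by
  obtain ⟨k, rfl⟩ : ∃ k, m = k + 1 := ⟨m - 1, by omega⟩
  rw [geomSemigroup_succ] at hn ⊢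
  simpa [pow_succ] using add_mul_mem_glue hn b

theorem finite_compl_geomSemigroup_and_ncard {a b m : ℕ} (hcop : a.Coprime b) (ha : 0 < a)
    (hm : 1 ≤ m) :
    (geomSemigroup a b m)ᶜ.Finite ∧ 2 * ((a : ℤ) - b) * ((geomSemigroup a b m)ᶜ.ncard : ℤ)
      = (a : ℤ) - b + ((b : ℤ) - 1) * (a : ℤ) ^ m - ((a : ℤ) - 1) * (b : ℤ) ^ m := by
  induction m, hm using Nat.le_induction with
  | base =>
    rw [geomSemigroup_one, Set.compl_univ, Set.ncard_empty]
    exact ⟨Set.finite_empty, by push_cast; ring⟩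
  | succ m hm ih =>
    rw [geomSemigroup_succ]
    obtain ⟨hfin, hcard⟩ := finite_compl_glue_and_ncard (hcop.pow_right m) ha
      (fun _ => add_pow_mem_geomSemigroup hm) ih.1
    refine ⟨hfin, ?_⟩
    have hcard' := congrArg (Nat.cast : ℕ → ℤ) hcard
    push_cast at hcard'
    linear_combination ((a : ℤ) - b) * hcard' + (a : ℤ) * ih.2

end Telescopic

theorem gaps_count_geometric_general
    (a b : ℕ) (hab : b < a) (h : Nat.gcd a b = 1)
    (m : ℕ) (hm : 2 ≤ m) :
    2 * ((a : ℤ) - b) *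
        (Set.ncard {n : ℕ | ¬ ∃ x : ℕ → ℕ,
          n = ∑ i ∈ Finset.Icc 1 m, a ^ (m - i) * b ^ (i - 1) * x i} : ℤ)
      = (a : ℤ) - b + ((b : ℤ) - 1) * (a : ℤ) ^ m - ((a : ℤ) - 1) * (b : ℤ) ^ m :=
  (Telescopic.finite_compl_geomSemigroup_and_ncard h (Nat.zero_lt_of_lt hab) (by omega)).2

/-- For coprime positive integers `a > b` and `m ≥ 2`, the numerical semigroup
generated by `a_i = a^{m-i} b^{i-1}` (`1 ≤ i ≤ m`) has exactly
`(a - b + (b-1)a^m - (a-1)b^m)/(2(a-b))` gaps. -/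
theorem gaps_count_geometric
    (a b : ℕ) (hb : 0 < b) (hab : b < a) (h : Nat.gcd a b = 1)
    (m : ℕ) (hm : 2 ≤ m) :
    2 * ((a : ℤ) - b) *
        (Set.ncard {n : ℕ | ¬ ∃ x : ℕ → ℕ,
          n = ∑ i ∈ Finset.Icc 1 m, a ^ (m - i) * b ^ (i - 1) * x i} : ℤ)
      = (a : ℤ) - b + ((b : ℤ) - 1) * (a : ℤ) ^ m - ((a : ℤ) - 1) * (b : ℤ) ^ m :=
  gaps_count_geometric_general a b hab h m hm
end
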